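/- If f is a non-erasing morphism that is strongly quasiperiodic on infinite words, then for every finite word u and every letter α, the quasiperiod of f(u α^ω) is a factor of f(α)^3 of length less than 2|f(α)|. -/

import Mathlib

namespace QPm

variable {A : Type*}

/-- Image of a finite word under a morphism given by images of letters. -/
def applyF (f : A → List A) (w : List A) : List A := (w.map f).flatten

/-- A morphism is non-erasing if images of letters are nonempty. -/
def NonErasing (f : A → List A) : Prop := ∀ a, f a ≠ []

/-- `wpow u k` is the `k`-fold concatenation `u^k`. -/
def wpow (u : List A) (k : ℕ) : List A := (List.replicate k u).flatten

/-- Every position of `w` is covered by an occurrence of `q` in `w`. -/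
def Covers (q w : List A) : Prop :=
  ∀ i < w.length, ∃ j, j ≤ i ∧ i < j + q.length ∧ j + q.length ≤ w.length ∧
    (w.drop j).take q.length = q

/-- `w` is `q`-quasiperiodic. -/
def QP (q w : List A) : Prop := q ≠ [] ∧ w ≠ q ∧ Covers q w

def Quasiperiodic (w : List A) : Prop := ∃ q, QP q w

def Superprimitive (w : List A) : Prop := ¬ Quasiperiodic w

/-- `q` is THE quasiperiod (shortest quasiperiod) of `w`. -/
def IsQuasiperiod (q w : List A) : Prop :=
  QP q w ∧ ∀ q', QP q' w → q.length ≤ q'.length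

/-- Every position of the infinite word `x` is covered by an occurrence of `q`. -/
def InfCovers (q : List A) (x : ℕ → A) : Prop :=
  ∀ i : ℕ, ∃ j, j ≤ i ∧ i < j + q.length ∧
    ∀ t (ht : t < q.length), x (j + t) = q.get ⟨t, ht⟩

/-- The infinite word `x` is `q`-quasiperiodic. -/
def InfQP (q : List A) (x : ℕ → A) : Prop := q ≠ [] ∧ InfCovers q x

def InfQuasiperiodic (x : ℕ → A) : Prop := ∃ q, InfQP q x

/-- `q` is THE quasiperiod (shortest quasiperiod) of the infinite word `x`. -/
def IsInfQuasiperiod (q : List A) (x : ℕ → A) : Prop :=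
  InfQP q x ∧ ∀ q', InfQP q' x → q.length ≤ q'.length

/-- Image of an infinite word under a (non-erasing) morphism: the `n`-th letter
of `f(x)` is the `n`-th letter of the image of a sufficiently long prefix. -/
def mapInf (f : A → List A) (x : ℕ → A) (n : ℕ) : A :=
  (applyF f (List.ofFn (fun i : Fin (n + 1) => x i))).getD n (x 0)

/-- `f` maps every (nonempty) finite word to a quasiperiodic word. -/
def StronglyQPFin (f : A → List A) : Prop :=
  ∀ w : List A, w ≠ [] → Quasiperiodic (applyF f w)

/-- `f` maps every infinite word to a quasiperiodic infinite word. -/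
def StronglyQPInf (f : A → List A) : Prop :=
  ∀ x : ℕ → A, InfQuasiperiodic (mapInf f x)

/-- `f` maps some non-quasiperiodic finite word to a quasiperiodic word. -/
def WeaklyQPFin (f : A → List A) : Prop :=
  ∃ w : List A, ¬ Quasiperiodic w ∧ Quasiperiodic (applyF f w)

/-- `f` maps some non-quasiperiodic infinite word to a quasiperiodic word. -/
def WeaklyQPInf (f : A → List A) : Prop :=
  ∃ x : ℕ → A, ¬ InfQuasiperiodic x ∧ InfQuasiperiodic (mapInf f x)

/-- The ultimately periodic infinite word `u v^ω` (with default letter `d`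
used only when `v` is empty). -/
def ultPer (u v : List A) (d : A) : ℕ → A :=
  fun n => if h : n < u.length then u.get ⟨n, h⟩
           else v.getD ((n - u.length) % v.length) d

/-- A finite word is primitive if it is not a power `u^k` with `k ≥ 2`. -/
def Primitive (w : List A) : Prop :=
  ¬ ∃ (u : List A) (k : ℕ), 2 ≤ k ∧ w = wpow u k

/-- `k`-fold composition of the morphism `f`. -/
def iterF (f : A → List A) : ℕ → A → List A
  | 0, a => [a]
  | (k + 1), a => applyF f (iterF f k a)

/-!
Beyond position `|f(u)|` the word `f(u α^ω)` is `f(α)^ω`. An occurrence of the quasiperiod `q`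
covering position `|f(u)| + |q|` lies entirely in that part, so `q` is a factor of `f(α)^ω` and has
period `|f(α)|`. If `|q| ≥ 2|f(α)|`, deleting the last `|f(α)|` letters of `q` would still give a
cover, contradicting minimality; and a factor of `f(α)^ω` of length `< 2|f(α)|` is a factor of
`f(α)^3`.
-/

lemma applyF_append (f : A → List A) (v w : List A) :
    applyF f (v ++ w) = applyF f v ++ applyF f w := by
  simp [applyF]

lemma applyF_replicate (f : A → List A) (r : ℕ) (a : A) :
    applyF f (List.replicate r a) = wpow (f a) r := by
  simp [applyF, wpow]

lemma length_le_length_applyF {f : A → List A} (hf : NonErasing f) (w : List A) :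
    w.length ≤ (applyF f w).length := by
  induction w with
  | nil => simp [applyF]
  | cons a w ih =>
    have : 0 < (f a).length := List.length_pos_iff.mpr (hf a)
    simp only [applyF, List.map_cons, List.flatten_cons, List.length_append,
      List.length_cons] at ih ⊢
    omega

@[simp]
lemma length_wpow (v : List A) (k : ℕ) : (wpow v k).length = k * v.length := by
  simp [wpow]

lemma wpow_succ (v : List A) (k : ℕ) : wpow v (k + 1) = v ++ wpow v k := by
  simp [wpow, List.replicate_succ]

lemma getElem_wpow (v : List A) (k i : ℕ) (hi : i < (wpow v k).length) :
    (wpow v k)[i] = v[i % v.length]'(Nat.mod_lt _ (List.length_pos_iff.mpr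
      (by rintro rfl; simp at hi))) := by
  induction k generalizing i with
  | zero => simp at hi
  | succ k ih =>
    simp only [wpow_succ]
    rcases lt_or_ge i v.length with hiv | hiv
    · simp only [List.getElem_append_left hiv, Nat.mod_eq_of_lt hiv]
    · rw [List.getElem_append_right hiv, ih]
      simp only [Nat.mod_eq_sub_mod hiv]

lemma ofFn_ultPer_singleton (u : List A) (α : A) {n : ℕ} (hn : u.length ≤ n) :
    List.ofFn (fun i : Fin n => ultPer u [α] α i) = u ++ List.replicate (n - u.length) α := by
  apply List.ext_getElem
  · simp only [List.length_ofFn, List.length_append, List.length_replicate]; omega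
  · intro i _ _
    simp only [List.getElem_ofFn, ultPer]
    rcases lt_or_ge i u.length with hiu | hiu
    · simp [hiu, List.getElem_append_left hiu]
    · simp [Nat.not_lt.mpr hiu, List.getElem_append_right hiu]

lemma mapInf_ultPer_singleton {f : A → List A} (hf : NonErasing f) (u : List A) (α : A)
    (m : ℕ) :
    mapInf f (ultPer u [α] α) ((applyF f u).length + m) =
      (f α)[m % (f α).length]'(Nat.mod_lt _ (List.length_pos_iff.mpr (hf α))) := by
  set N := (applyF f u).length
  have hp : 0 < (f α).length := List.length_pos_iff.mpr (hf α)
  have hu : u.length ≤ N := length_le_length_applyF hf u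
  have hprefix : applyF f (List.ofFn fun i : Fin (N + m + 1) => ultPer u [α] α i) =
      applyF f u ++ wpow (f α) (N + m + 1 - u.length) := by
    rw [ofFn_ultPer_singleton u α (by omega), applyF_append, applyF_replicate]
  have hm : m < (N + m + 1 - u.length) * (f α).length :=
    calc m < N + m + 1 - u.length := by omega
      _ ≤ _ := Nat.le_mul_of_pos_right _ hp
  have hlen : N + m < (applyF f u ++ wpow (f α) (N + m + 1 - u.length)).length := by
    simp only [List.length_append, length_wpow]; omega
  rw [mapInf, hprefix, List.getD_eq_getElem _ _ hlen, List.getElem_append_right (by omega),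
    getElem_wpow]
  simp only [N, Nat.add_sub_cancel_left]

/-- The shortened occurrence at `j` covers all but the last `p` positions of the one at `j`,
and periodicity makes the shortened word occur at `j + p`, which covers those. -/
theorem InfCovers.take_of_period {q : List A} {x : ℕ → A} {p : ℕ} (hq : InfCovers q x)
    (hp : 2 * p ≤ q.length) (hper : ∀ t (ht : t + p < q.length), q[t + p] = q[t]) :
    InfCovers (q.take (q.length - p)) x := by
  intro i
  obtain ⟨j, hji, hij, hocc⟩ := hq i
  simp only [List.length_take, min_eq_left (Nat.sub_le _ _), List.get_eq_getElem,
    List.getElem_take]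
  rcases lt_or_ge i (j + (q.length - p)) with hcase | hcase
  · exact ⟨j, hji, hcase, fun t ht => by simpa using hocc t (by omega)⟩
  · refine ⟨j + p, by omega, by omega, fun t ht => ?_⟩
    rw [← hper t (by omega), add_assoc, add_comm p t]
    simpa using hocc (t + p) (by omega)

theorem IsInfQuasiperiod.length_lt_of_period {q : List A} {x : ℕ → A} {p : ℕ}
    (hq : IsInfQuasiperiod q x) (hp : 0 < p)
    (hper : ∀ t (ht : t + p < q.length), q[t + p] = q[t]) :
    q.length < 2 * p := by
  by_contra! hlen
  have hshort := hq.2 _ ⟨?_, hq.1.2.take_of_period hlen hper⟩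
  · simp only [List.length_take] at hshort
    omega
  · simp only [ne_eq, List.take_eq_nil_iff, not_or]
    exact ⟨by omega, hq.1.1⟩

theorem infix_wpow_of_getElem_mod {q v : List A} {r k : ℕ} (hv : v ≠ [])
    (hk : q.length + v.length ≤ k * v.length)
    (hq : ∀ t (ht : t < q.length),
      q[t] = v[(r + t) % v.length]'(Nat.mod_lt _ (List.length_pos_iff.mpr hv))) :
    q <:+: wpow v k := by
  have hp : 0 < v.length := List.length_pos_iff.mpr hv
  have hr : r % v.length < v.length := Nat.mod_lt _ hp
  suffices q = ((wpow v k).drop (r % v.length)).take q.length by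
    rw [this]
    exact (List.take_prefix _ _).isInfix.trans (List.drop_suffix _ _).isInfix
  apply List.ext_getElem
  · simp only [List.length_take, List.length_drop, length_wpow, left_eq_inf]; omega
  · intro t ht _
    rw [List.getElem_take, List.getElem_drop, getElem_wpow, hq t ht]
    simp only [Nat.mod_add_mod]

theorem stmt9_general {A : Type*} (f : A → List A) (hf : NonErasing f)
    (u : List A) (α : A) (q : List A)
    (hq : IsInfQuasiperiod q (mapInf f (ultPer u [α] α))) :
    q <:+: wpow (f α) 3 ∧ q.length < 2 * (f α).length := by
  have hp : 0 < (f α).length := List.length_pos_iff.mpr (hf α)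
  set N := (applyF f u).length
  obtain ⟨j, hjle, hlt, hocc⟩ := hq.1.2 (N + q.length)
  have hq_get : ∀ t (ht : t < q.length),
      q[t] = (f α)[(j - N + t) % (f α).length]'(Nat.mod_lt _ hp) := by
    intro t ht
    rw [← mapInf_ultPer_singleton hf, ← add_assoc, Nat.add_sub_cancel' (by omega), hocc t ht,
      List.get_eq_getElem]
  have hlen : q.length < 2 * (f α).length := hq.length_lt_of_period hp fun t ht => by
    rw [hq_get, hq_get]
    simp only [← add_assoc, Nat.add_mod_right]
  exact ⟨infix_wpow_of_getElem_mod (hf α) (by omega) hq_get, hlen⟩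

theorem stmt9 {A : Type*} (f : A → List A) (hf : NonErasing f)
    (h : StronglyQPInf f) (u : List A) (α : A) (q : List A)
    (hq : IsInfQuasiperiod q (mapInf f (ultPer u [α] α))) :
    q <:+: wpow (f α) 3 ∧ q.length < 2 * (f α).length :=
  stmt9_general f hf u α q hq

end QPm
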